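/- arXiv:2505.12171 — 5 statements merged into one kernel-verified Lean document; each statement's English description precedes it below -/
import Mathlib

section
/- (Proposition 2, magnitude bound.) Let A ≥ 0, G ≥ 0, Δt ∈ (0,1] be real numbers satisfying (G − Δt·A)² ≤ 4·A. Then the complex number λ(A,G,Δt) satisfies |λ(A,G,Δt)| = 1/√(1 + Δt·G), and in particular 0 < |λ(A,G,Δt)| ≤ 1. -/
/-- The eigenvalue of the D-LinOSS recurrent matrix `M(A,G,Δt)` with nonnegative
imaginary part (under the stability criterion). -/
noncomputable def lamEig (A G Δt : ℝ) : ℂ :=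
  ((1 + (Δt / 2) * G - (Δt ^ 2 / 2) * A) / (1 + Δt * G) : ℝ) +
    Complex.I * ((Δt / 2) * Real.sqrt (4 * A - (G - Δt * A) ^ 2) / (1 + Δt * G) : ℝ)

/-! `λ` and `conj λ` are the eigenvalues of `M(A,G,Δt)`, so `|λ|² = det M = 1 / (1 + Δt·G)`.
Concretely, writing `λ = (a + i b) / s` with `s = 1 + Δt·G`, the stability criterion makes the
square root exact and `a² + b² = s` is a polynomial identity, whence `|λ| = √(s / s²) = 1 / √s`. -/

theorem Complex.norm_ofReal_div_add_I_mul_ofReal_div {a b s : ℝ} (h : a ^ 2 + b ^ 2 = s) :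
    ‖((a / s : ℝ) : ℂ) + Complex.I * ((b / s : ℝ) : ℂ)‖ = 1 / √s := by
  rw [mul_comm Complex.I, Complex.norm_add_mul_I, div_pow, div_pow, ← add_div, h,
    pow_two, div_self_mul_self', Real.sqrt_inv, one_div]

theorem lamEig_numerator_sq_add_sq {A G Δt : ℝ} (hcrit : (G - Δt * A) ^ 2 ≤ 4 * A) :
    (1 + Δt / 2 * G - Δt ^ 2 / 2 * A) ^ 2 + (Δt / 2 * √(4 * A - (G - Δt * A) ^ 2)) ^ 2 =
      1 + Δt * G := by
  rw [mul_pow, Real.sq_sqrt (sub_nonneg.mpr hcrit)]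
  ring

theorem norm_lamEig {A G Δt : ℝ} (hcrit : (G - Δt * A) ^ 2 ≤ 4 * A) :
    ‖lamEig A G Δt‖ = 1 / √(1 + Δt * G) :=
  Complex.norm_ofReal_div_add_I_mul_ofReal_div (lamEig_numerator_sq_add_sq hcrit)

theorem magnitude_lamEig_general (A G Δt : ℝ) (hG : 0 ≤ G)
    (hΔt : Δt ∈ Set.Ioc (0 : ℝ) 1) (hcrit : (G - Δt * A) ^ 2 ≤ 4 * A) :
    ‖lamEig A G Δt‖ = 1 / Real.sqrt (1 + Δt * G) ∧
    0 < ‖lamEig A G Δt‖ ∧ ‖lamEig A G Δt‖ ≤ 1 := by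
  have hs : 1 ≤ 1 + Δt * G := le_add_of_nonneg_right (mul_nonneg hΔt.1.le hG)
  have hsqrt : 1 ≤ √(1 + Δt * G) := Real.one_le_sqrt.mpr hs
  rw [norm_lamEig hcrit]
  exact ⟨rfl, by positivity, div_le_one_of_le₀ hsqrt (by positivity)⟩

theorem magnitude_lamEig (A G Δt : ℝ) (hA : 0 ≤ A) (hG : 0 ≤ G)
    (hΔt : Δt ∈ Set.Ioc (0 : ℝ) 1) (hcrit : (G - Δt * A) ^ 2 ≤ 4 * A) :
    ‖lamEig A G Δt‖ = 1 / Real.sqrt (1 + Δt * G) ∧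
    0 < ‖lamEig A G Δt‖ ∧ ‖lamEig A G Δt‖ ≤ 1 :=
  magnitude_lamEig_general A G Δt hG hΔt hcrit
end

section
/- (Proposition 3, injectivity.) Fix a real number Δt ∈ (0,1]. If (A₁,G₁) and (A₂,G₂) both lie in the stability set S(Δt) and λ(A₁,G₁,Δt) = λ(A₂,G₂,Δt), then A₁ = A₂ and G₁ = G₂. That is, the map Φ : S(Δt) → ℂ sending (A,G) to λ(A,G,Δt) is injective. -/
/-- The stability set `S(Δt)`. -/
def stabilitySet (Δt : ℝ) : Set (ℝ × ℝ) :=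
  {p | 0 ≤ p.1 ∧ 0 ≤ p.2 ∧ (p.2 - Δt * p.1) ^ 2 ≤ 4 * p.1}

/-! On the stability set `|λ|² = 1 / (1 + Δt G)`, so the modulus of `λ` determines `G`;
for fixed `G` the real part of `λ` is affine in `A` with nonzero slope, so it determines `A`. -/

lemma lamEig_re (A G Δt : ℝ) :
    (lamEig A G Δt).re = (1 + Δt / 2 * G - Δt ^ 2 / 2 * A) / (1 + Δt * G) := by
  rw [lamEig, Complex.add_re, Complex.I_mul_re, Complex.ofReal_re, Complex.ofReal_im,
    neg_zero, add_zero]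

lemma normSq_lamEig {A G Δt : ℝ} (hd : 1 + Δt * G ≠ 0) (hs : (G - Δt * A) ^ 2 ≤ 4 * A) :
    Complex.normSq (lamEig A G Δt) = (1 + Δt * G)⁻¹ := by
  have hsqrt : Real.sqrt (4 * A - (G - Δt * A) ^ 2) ^ 2 = 4 * A - (G - Δt * A) ^ 2 :=
    Real.sq_sqrt (sub_nonneg.mpr hs)
  rw [lamEig, mul_comm Complex.I, Complex.normSq_add_mul_I, div_pow, div_pow, mul_pow, hsqrt]
  field_simp
  ring

theorem lamEig_injective (Δt : ℝ) (hΔt : Δt ∈ Set.Ioc (0 : ℝ) 1)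
    (A₁ G₁ A₂ G₂ : ℝ) (h₁ : (A₁, G₁) ∈ stabilitySet Δt)
    (h₂ : (A₂, G₂) ∈ stabilitySet Δt)
    (heq : lamEig A₁ G₁ Δt = lamEig A₂ G₂ Δt) :
    A₁ = A₂ ∧ G₁ = G₂ := by
  obtain ⟨hΔt₀, -⟩ := hΔt
  obtain ⟨-, hG₁, hs₁⟩ := h₁
  obtain ⟨-, hG₂, hs₂⟩ := h₂
  have hd₁ : 1 + Δt * G₁ ≠ 0 := by positivity
  have hd₂ : 1 + Δt * G₂ ≠ 0 := by positivity
  have hG : G₁ = G₂ := by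
    have hnorm := congrArg Complex.normSq heq
    rwa [normSq_lamEig hd₁ hs₁, normSq_lamEig hd₂ hs₂, inv_inj, add_right_inj,
      mul_right_inj' hΔt₀.ne'] at hnorm
  subst hG
  have hre := congrArg Complex.re heq
  rw [lamEig_re, lamEig_re, div_left_inj' hd₁, sub_right_inj,
    mul_right_inj' (by positivity)] at hre
  exact ⟨hre, rfl⟩
end

section
/- (Proposition 3, surjectivity via explicit inverse.) Fix a real number Δt ∈ (0,1]. Let λ ∈ ℂ satisfy 0 < |λ| ≤ 1 and Im(λ) ≥ 0, and define the real numbers A := (|λ|² − 2·Re(λ) + 1)/(Δt²·|λ|²) and G := (1 − |λ|²)/(Δt·|λ|²). Then A ≥ 0, G ≥ 0, (G − Δt·A)² ≤ 4·A (i.e., (A,G) ∈ S(Δt)), and λ is a root of the characteristic polynomial of M(A,G,Δt); in fact λ = λ(A,G,Δt). -/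
open Polynomial

/-- The D-LinOSS per-component recurrent matrix. -/
noncomputable def Mrec (A G Δt : ℝ) : Matrix (Fin 2) (Fin 2) ℝ :=
  !![1 / (1 + Δt * G), -(Δt * A) / (1 + Δt * G);
     Δt / (1 + Δt * G), 1 - (Δt ^ 2 * A) / (1 + Δt * G)]

/-!
`Mrec A G Δt` has determinant `1 / (1 + Δt G)` and trace `(2 + Δt G - Δt² A) / (1 + Δt G)`,
and `λ` is a root of the real quadratic `X² - 2 Re λ X + |λ|²`. Solving
`det = |λ|²`, `trace = 2 Re λ` for `G` and `A` gives the formulas of the statement. Then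
`A = |1 - λ|² / (Δt² |λ|²) ≥ 0`, `G ≥ 0` because `|λ| ≤ 1`, and the discriminant
`4 A - (G - Δt A)²` is the square of `2 Im λ / (Δt |λ|²)`, whose square root (as `Im λ ≥ 0`)
recovers `Im λ` in the formula for `lamEig`.
-/

theorem Complex.aeval_X_sq_sub_two_re_mul_X_add_sq_norm (z : ℂ) :
    aeval z (X ^ 2 - C (2 * z.re) * X + C (‖z‖ ^ 2) : ℝ[X]) = 0 := by
  have hre : z + (starRingEnd ℂ) z = 2 * z.re := by exact_mod_cast Complex.add_conj z
  simp only [map_add, map_sub, map_mul, map_pow, aeval_X, aeval_C, Complex.coe_algebraMap,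
    Complex.ofReal_ofNat]
  linear_combination z * hre - Complex.mul_conj' z

section Mrec

variable {A G Δt : ℝ}

theorem trace_Mrec (hs : 1 + Δt * G ≠ 0) :
    (Mrec A G Δt).trace = (2 + Δt * G - Δt ^ 2 * A) / (1 + Δt * G) := by
  rw [Mrec, Matrix.trace_fin_two_of]
  field_simp
  ring

theorem det_Mrec (hs : 1 + Δt * G ≠ 0) : (Mrec A G Δt).det = 1 / (1 + Δt * G) := by
  rw [Mrec, Matrix.det_fin_two_of]
  field_simp
  ring

end Mrec

noncomputable def lamInvA (Δt : ℝ) (lam : ℂ) : ℝ :=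
  (‖lam‖ ^ 2 - 2 * lam.re + 1) / (Δt ^ 2 * ‖lam‖ ^ 2)

noncomputable def lamInvG (Δt : ℝ) (lam : ℂ) : ℝ :=
  (1 - ‖lam‖ ^ 2) / (Δt * ‖lam‖ ^ 2)

section lamInv

variable {Δt : ℝ} {lam : ℂ}

theorem lamInvA_nonneg : 0 ≤ lamInvA Δt lam := by
  have h : ‖lam‖ ^ 2 - 2 * lam.re + 1 = ‖1 - lam‖ ^ 2 := by
    rw [Complex.sq_norm, Complex.sq_norm, Complex.normSq_apply, Complex.normSq_apply]
    simp only [Complex.sub_re, Complex.sub_im, Complex.one_re, Complex.one_im]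
    ring
  rw [lamInvA, h]
  positivity

theorem lamInvG_nonneg (hΔt : 0 ≤ Δt) (hle : ‖lam‖ ≤ 1) : 0 ≤ lamInvG Δt lam := by
  have : ‖lam‖ ^ 2 ≤ 1 := pow_le_one₀ (norm_nonneg lam) hle
  unfold lamInvG
  apply div_nonneg <;> [linarith; positivity]

variable (hΔt : Δt ≠ 0) (hlam : lam ≠ 0)
include hΔt hlam

theorem one_add_mul_lamInvG : 1 + Δt * lamInvG Δt lam = 1 / ‖lam‖ ^ 2 := by
  have : ‖lam‖ ≠ 0 := norm_ne_zero_iff.mpr hlam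
  rw [lamInvG]
  field_simp
  ring

theorem four_mul_lamInvA_sub_sq :
    4 * lamInvA Δt lam - (lamInvG Δt lam - Δt * lamInvA Δt lam) ^ 2 =
      (2 * lam.im / (Δt * ‖lam‖ ^ 2)) ^ 2 := by
  have : ‖lam‖ ≠ 0 := norm_ne_zero_iff.mpr hlam
  have hnorm : ‖lam‖ ^ 2 = lam.re ^ 2 + lam.im ^ 2 := by
    rw [Complex.sq_norm, Complex.normSq_apply]; ring
  rw [lamInvA, lamInvG]
  field_simp
  rw [hnorm]
  ring

theorem aeval_charpoly_Mrec_lamInv :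
    aeval lam (Mrec (lamInvA Δt lam) (lamInvG Δt lam) Δt).charpoly = 0 := by
  have : ‖lam‖ ≠ 0 := norm_ne_zero_iff.mpr hlam
  have hs := one_add_mul_lamInvG hΔt hlam
  have hs0 : 1 + Δt * lamInvG Δt lam ≠ 0 := by rw [hs]; positivity
  have htrace : (Mrec (lamInvA Δt lam) (lamInvG Δt lam) Δt).trace = 2 * lam.re := by
    rw [trace_Mrec hs0, hs, lamInvA, lamInvG]
    field_simp
    ring
  have hdet : (Mrec (lamInvA Δt lam) (lamInvG Δt lam) Δt).det = ‖lam‖ ^ 2 := by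
    rw [det_Mrec hs0, hs, one_div_one_div]
  rw [Matrix.charpoly_fin_two, htrace, hdet]
  exact Complex.aeval_X_sq_sub_two_re_mul_X_add_sq_norm lam

end lamInv

theorem lamEig_lamInv {Δt : ℝ} {lam : ℂ} (hΔt : 0 < Δt) (hlam : lam ≠ 0) (him : 0 ≤ lam.im) :
    lamEig (lamInvA Δt lam) (lamInvG Δt lam) Δt = lam := by
  have : ‖lam‖ ≠ 0 := norm_ne_zero_iff.mpr hlam
  rw [lamEig, one_add_mul_lamInvG hΔt.ne' hlam, four_mul_lamInvA_sub_sq hΔt.ne' hlam,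
    Real.sqrt_sq (by positivity)]
  apply Complex.ext
  · simp only [Complex.add_re, Complex.ofReal_re, Complex.re_mul_ofReal, Complex.I_re, zero_mul,
      add_zero]
    rw [lamInvA, lamInvG]
    field_simp
    ring
  · simp only [Complex.add_im, Complex.ofReal_im, Complex.im_mul_ofReal, Complex.I_im, one_mul,
      zero_add]
    field_simp

theorem lamEig_surjective (Δt : ℝ) (hΔt : Δt ∈ Set.Ioc (0 : ℝ) 1)
    (lam : ℂ) (hpos : 0 < ‖lam‖) (hle : ‖lam‖ ≤ 1)
    (him : 0 ≤ lam.im) :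
    let A : ℝ := (‖lam‖ ^ 2 - 2 * lam.re + 1) / (Δt ^ 2 * ‖lam‖ ^ 2)
    let G : ℝ := (1 - ‖lam‖ ^ 2) / (Δt * ‖lam‖ ^ 2)
    0 ≤ A ∧ 0 ≤ G ∧ (G - Δt * A) ^ 2 ≤ 4 * A ∧
      Polynomial.aeval lam (Mrec A G Δt).charpoly = 0 ∧
      lam = lamEig A G Δt := by
  intro A G
  have hΔ : Δt ≠ 0 := hΔt.1.ne'
  have hlam : lam ≠ 0 := norm_pos_iff.mp hpos
  have hdisc : 4 * A - (G - Δt * A) ^ 2 = (2 * lam.im / (Δt * ‖lam‖ ^ 2)) ^ 2 :=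
    four_mul_lamInvA_sub_sq hΔ hlam
  refine ⟨lamInvA_nonneg, lamInvG_nonneg hΔt.1.le hle,
    sub_nonneg.mp (hdisc ▸ sq_nonneg _),
    aeval_charpoly_Mrec_lamInv hΔ hlam, (lamEig_lamInv hΔt.1 hlam him).symm⟩
end

section
/- (Proposition 4, LinOSS-IM case.) The set of complex numbers {1/(1 + Δt²·A) + i·Δt·√A/(1 + Δt²·A) : A ∈ ℝ, A ≥ 0, Δt ∈ (0,1]} ∪ {1/(1 + Δt²·A) − i·Δt·√A/(1 + Δt²·A) : A ∈ ℝ, A ≥ 0, Δt ∈ (0,1]} has Lebesgue measure zero in ℂ (where √ is the real square root). -/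
/-!
Both eigenvalues have the form `x ± i y` with `x = 1/(1 + s²)`, `y = s/(1 + s²)` and
`s = Δt √A`, so that `x² + y² = x`: they all lie on the circle `|z - 1/2| = 1/2`
(the image of the line `Re w = 1` under `w ↦ 1/w`), which is a Lebesgue null set.
-/

open MeasureTheory Complex

theorem Complex.mem_sphere_half_iff (z : ℂ) :
    z ∈ Metric.sphere (1 / 2 : ℂ) (1 / 2) ↔ normSq z = z.re := by
  rw [mem_sphere_iff_norm, ← sq_eq_sq₀ (norm_nonneg _) (by norm_num), Complex.sq_norm,
    normSq_apply, normSq_apply]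
  simp only [sub_re, sub_im, div_ofNat_re, div_ofNat_im, one_re, one_im]
  constructor <;> intro h <;> linarith

theorem Complex.ofReal_add_I_mul_mem_sphere_half {x y : ℝ} (h : x ^ 2 + y ^ 2 = x) :
    (x : ℂ) + I * y ∈ Metric.sphere (1 / 2 : ℂ) (1 / 2) := by
  rw [mem_sphere_half_iff, mul_comm, normSq_add_mul_I, h]
  simp

theorem linossIM_eigenvalues_measure_zero :
    volume
      ({z : ℂ | ∃ A Δt : ℝ, 0 ≤ A ∧ Δt ∈ Set.Ioc (0 : ℝ) 1 ∧
          z = ((1 / (1 + Δt ^ 2 * A) : ℝ) : ℂ) +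
            Complex.I * ((Δt * Real.sqrt A / (1 + Δt ^ 2 * A) : ℝ) : ℂ)} ∪
        {z : ℂ | ∃ A Δt : ℝ, 0 ≤ A ∧ Δt ∈ Set.Ioc (0 : ℝ) 1 ∧
          z = ((1 / (1 + Δt ^ 2 * A) : ℝ) : ℂ) -
            Complex.I * ((Δt * Real.sqrt A / (1 + Δt ^ 2 * A) : ℝ) : ℂ)}) = 0 := by
  refine measure_mono_null ?_ (Measure.addHaar_sphere volume (1 / 2 : ℂ) (1 / 2))
  have on_circle : ∀ A Δt : ℝ, 0 ≤ A →
      (1 / (1 + Δt ^ 2 * A)) ^ 2 + (Δt * √A / (1 + Δt ^ 2 * A)) ^ 2 = 1 / (1 + Δt ^ 2 * A) := by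
    intro A Δt hA
    rw [show Δt ^ 2 * A = (Δt * √A) ^ 2 by rw [mul_pow, Real.sq_sqrt hA]]
    field_simp
  rintro z (⟨A, Δt, hA, -, rfl⟩ | ⟨A, Δt, hA, -, rfl⟩)
  · exact ofReal_add_I_mul_mem_sphere_half (on_circle A Δt hA)
  · rw [sub_eq_add_neg, ← mul_neg, ← ofReal_neg]
    exact ofReal_add_I_mul_mem_sphere_half (by rw [neg_sq]; exact on_circle A Δt hA)
end

section
/- (Frequency–magnitude coupling of LinOSS-IM.) For all real A ≥ 0 and Δt > 0, the complex numbers λ^IM±(A,Δt) satisfy |λ^IM±(A,Δt)|² = 1/(1 + Δt²·A), and moreover Re(λ^IM±(A,Δt)) = |λ^IM±(A,Δt)|². -/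
/-!
With `c = Δt √A` and `s = ±1`, the eigenvalue is `λ = (1 + s c i) / (1 + c²) = 1 / (1 - s c i)`.
For any `z` with `Re z = 1` one has `Re (1/z) = Re z / |z|² = 1 / |z|² = |1/z|²`, and here
`|z|² = 1 + c² = 1 + Δt² A`.
-/

/-- The LinOSS-IM per-component eigenvalues (`s = 1` for `+`, `s = -1` for `−`). -/
noncomputable def lamIM (A Δt : ℝ) (s : ℝ) : ℂ :=
  ((1 / (1 + Δt ^ 2 * A) : ℝ) : ℂ) +
    (s : ℂ) * Complex.I * ((Δt * Real.sqrt A / (1 + Δt ^ 2 * A) : ℝ) : ℂ)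

open Complex

theorem Complex.inv_re_eq_norm_sq_of_re_eq_one {z : ℂ} (hz : z.re = 1) :
    (z⁻¹).re = ‖z⁻¹‖ ^ 2 := by
  rw [inv_re, hz, Complex.sq_norm, normSq_inv, one_div]

theorem Complex.normSq_one_sub_mul_I {s : ℝ} (hs : s ^ 2 = 1) (c : ℝ) :
    normSq (1 - s * c * I) = 1 + c ^ 2 := by
  simp [normSq_apply, ← sq, mul_pow, hs]

theorem lamIM_eq_inv {A : ℝ} (Δt : ℝ) (hA : 0 ≤ A) {s : ℝ} (hs : s ^ 2 = 1) :
    lamIM A Δt s = (1 - s * ((Δt * √A : ℝ) : ℂ) * I)⁻¹ := by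
  have hd : (1 + Δt ^ 2 * A : ℂ) ≠ 0 := by
    exact_mod_cast (by positivity : (0 : ℝ) < 1 + Δt ^ 2 * A).ne'
  have hsqrt : ((√A : ℝ) : ℂ) ^ 2 = A := by exact_mod_cast Real.sq_sqrt hA
  have hs' : (s : ℂ) ^ 2 = 1 := by exact_mod_cast hs
  refine eq_inv_of_mul_eq_one_left ?_
  rw [lamIM]
  push_cast
  field_simp
  linear_combination (Δt ^ 2 * s ^ 2) * hsqrt + Δt ^ 2 * A * hs' - (s * Δt * √A) ^ 2 * I_sq

theorem linossIM_frequency_magnitude_coupling_general (A Δt : ℝ) (hA : 0 ≤ A)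
    (s : ℝ) (hs : s = 1 ∨ s = -1) :
    ‖lamIM A Δt s‖ ^ 2 = 1 / (1 + Δt ^ 2 * A) ∧
    (lamIM A Δt s).re = ‖lamIM A Δt s‖ ^ 2 := by
  have hs2 : s ^ 2 = 1 := by rcases hs with rfl | rfl <;> norm_num
  have hz : (1 - s * ((Δt * √A : ℝ) : ℂ) * I).re = 1 := by simp
  rw [lamIM_eq_inv Δt hA hs2, ← inv_re_eq_norm_sq_of_re_eq_one hz]
  refine ⟨?_, rfl⟩
  rw [inv_re, hz, normSq_one_sub_mul_I hs2, mul_pow, Real.sq_sqrt hA]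

theorem linossIM_frequency_magnitude_coupling (A Δt : ℝ) (hA : 0 ≤ A) (hΔt : 0 < Δt)
    (s : ℝ) (hs : s = 1 ∨ s = -1) :
    ‖lamIM A Δt s‖ ^ 2 = 1 / (1 + Δt ^ 2 * A) ∧
    (lamIM A Δt s).re = ‖lamIM A Δt s‖ ^ 2 :=
  linossIM_frequency_magnitude_coupling_general A Δt hA s hs
end
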